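/- Let M be a proper metric space such that for every pair of points x, y ∈ M there exists an isometry of M onto itself exchanging x and y (this holds in particular for every Riemannian symmetric space). Let ν be a positive Borel measure on M×M that is diagonally invariant. If ν(A × M) < ∞ for some nonempty open set A ⊆ M, then ν(B × M) = ν(M × B) for every Borel set B ⊆ M. -/

import Mathlib

/-!
The first marginal `ν.fst` is isometry-invariant, so by transitivity it gives every ball of radius
`r` the same mass `m r`, finite because `ν.fst` is finite on `A` and on its translates. Exchanging
the centres of `ν (B(x,1) × B(w,s))` by an isometry and integrating over `w` against `ν.fst` gives
`m 1 · ν.snd (B(x,s)) = m 1 · m s`, so `ν.snd` also gives every ball of radius `s` the mass `m s`.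
Two such measures coincide (Christensen): averaging a compactly supported continuous `f` over the
balls of radius `r` for one measure and integrating against the other yields `m r · ∫ f` for the
first, while for small `r` the average is uniformly close to `f`.
-/

open MeasureTheory

/-- A Borel measure `ν` on `M × M` is diagonally invariant if
`ν (gA × gB) = ν (A × B)` for every isometry `g` of `M` onto itself and all Borel sets
`A, B ⊆ M`. -/
def DiagonallyInvariant {M : Type*} [MetricSpace M] [MeasurableSpace M]
    (ν : Measure (M × M)) : Prop :=
  ∀ (g : M ≃ᵢ M) (A B : Set M), MeasurableSet A → MeasurableSet B →
    ν ((g '' A) ×ˢ (g '' B)) = ν (A ×ˢ B)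

open Metric Set Filter Topology
open scoped ENNReal NNReal CompactlySupported

section BallKernel

variable {M : Type*} [PseudoMetricSpace M] [MeasurableSpace M] [SecondCountableTopology M]

theorem MeasureTheory.Measure.eq_zero_of_measure_ball_eq_zero {μ : Measure M} {r : ℝ}
    (hr : 0 < r) (h : ∀ x, μ (ball x r) = 0) : μ = 0 :=
  measure_univ_eq_zero.1 <| measure_null_of_locally_null _ fun x _ =>
    ⟨ball x r, mem_nhdsWithin_of_mem_nhds (ball_mem_nhds x hr), h x⟩

variable [BorelSpace M]

theorem lintegral_setLIntegral_ball_comm (μ ρ : Measure M) [SFinite μ] [SFinite ρ]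
    {f : M → ℝ≥0∞} (hf : Measurable f) (r : ℝ) :
    ∫⁻ x, ∫⁻ y in ball x r, f y ∂μ ∂ρ = ∫⁻ y, f y * ρ (ball y r) ∂μ := by
  classical
  have hmeas : Measurable (Function.uncurry fun x y : M => (ball x r).indicator f y) := by
    have : (Function.uncurry fun x y : M => (ball x r).indicator f y)
        = {p : M × M | dist p.2 p.1 < r}.indicator (f ∘ Prod.snd) := by
      ext ⟨x, y⟩; simp [indicator_apply, mem_ball]
    rw [this]
    exact (hf.comp measurable_snd).indicator
      (isOpen_lt (continuous_snd.dist continuous_fst) continuous_const).measurableSet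
  simp_rw [← lintegral_indicator measurableSet_ball]
  rw [lintegral_lintegral_swap hmeas.aemeasurable]
  refine lintegral_congr fun y => ?_
  have hindicator : ∀ x, (ball x r).indicator f y = f y * (ball y r).indicator 1 x := by
    intro x
    rw [indicator_apply, indicator_apply, mem_ball, mem_ball, dist_comm]
    split_ifs <;> simp
  simp_rw [hindicator]
  rw [lintegral_const_mul _ (measurable_one.indicator measurableSet_ball),
    lintegral_indicator_one measurableSet_ball]

theorem lintegral_measure_ball_eq_mul {μ ρ : Measure M} [SFinite μ] [SFinite ρ] {r : ℝ}
    {c : ℝ≥0∞} (hρ : ∀ y, ρ (ball y r) = c) :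
    ∫⁻ x, μ (ball x r) ∂ρ = c * μ univ := by
  simpa [hρ] using lintegral_setLIntegral_ball_comm μ ρ measurable_one r

theorem lintegral_measure_prod_ball_right (ν : Measure (M × M)) [SFinite ν] {μ : Measure M}
    [SFinite μ] (E : Set M) {s : ℝ} {c : ℝ≥0∞} (hμ : ∀ y, μ (ball y s) = c) :
    ∫⁻ w, ν (E ×ˢ ball w s) ∂μ = c * ν (E ×ˢ univ) := by
  have hsnd : ∀ F, MeasurableSet F → (ν.restrict (E ×ˢ univ)).snd F = ν (E ×ˢ F) := by
    intro F hF
    rw [Measure.snd_apply hF, Measure.restrict_apply (measurable_snd hF)]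
    congr 1
    ext; simp [and_comm]
  simp_rw [← hsnd _ measurableSet_ball]
  rw [lintegral_measure_ball_eq_mul hμ, hsnd _ MeasurableSet.univ]

theorem lintegral_measure_prod_ball_left (ν : Measure (M × M)) [SFinite ν] {μ : Measure M}
    [SFinite μ] (E : Set M) {r : ℝ} {c : ℝ≥0∞} (hμ : ∀ y, μ (ball y r) = c) :
    ∫⁻ w, ν (ball w r ×ˢ E) ∂μ = c * ν (univ ×ˢ E) := by
  have hfst : ∀ F, MeasurableSet F → (ν.restrict (univ ×ˢ E)).fst F = ν (F ×ˢ E) := by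
    intro F hF
    rw [Measure.fst_apply hF, Measure.restrict_apply (measurable_fst hF)]
    congr 1
    ext; simp
  simp_rw [← hfst _ measurableSet_ball]
  rw [lintegral_measure_ball_eq_mul hμ, hfst _ MeasurableSet.univ]

end BallKernel

section Uniqueness

variable {M : Type*} [MetricSpace M] [ProperSpace M] [MeasurableSpace M] [BorelSpace M]
  {μ ρ : Measure M} [IsLocallyFiniteMeasure μ] [IsLocallyFiniteMeasure ρ] {m : ℝ → ℝ≥0∞}

theorem lintegral_le_of_measure_ball_eq (hμ : ∀ x r, μ (ball x r) = m r)
    (hρ : ∀ x r, ρ (ball x r) = m r) (hm : ∀ r, 0 < r → m r ≠ 0) (f : C_c(M, ℝ≥0)) :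
    ∫⁻ x, f x ∂μ ≤ ∫⁻ x, f x ∂ρ := by
  obtain _ | ⟨⟨x₀⟩⟩ := isEmpty_or_nonempty M
  · simp
  set T := thickening 1 (tsupport f)
  have hT : ρ T ≠ ∞ := ((measure_mono (thickening_subset_cthickening 1 _)).trans_lt
    f.hasCompactSupport.isCompact.cthickening.measure_lt_top).ne
  have hf : Measurable fun x => (f x : ℝ≥0∞) := f.continuous.measurable.coe_nnreal_ennreal
  have key : ∀ ε : ℝ≥0, 0 < ε → ∫⁻ x, f x ∂μ ≤ ∫⁻ x, f x ∂ρ + ε * ρ T := by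
    intro ε hε
    obtain ⟨δ, hδ, hfδ⟩ :=
      Metric.uniformContinuous_iff.1 (CompactlySupportedContinuousMapClass.uniformContinuous f) ε hε
    set r := min δ 1
    have hr : 0 < r := lt_min hδ one_pos
    have hmr : m r ≠ ∞ := hμ x₀ r ▸ measure_ball_lt_top.ne
    set g : M → ℝ≥0∞ := fun x => f x + T.indicator (fun _ => (ε : ℝ≥0∞)) x
    have hfg : ∀ x, ∀ y ∈ ball x r, (f y : ℝ≥0∞) ≤ g x := by
      intro x y hy
      by_cases hfy : f y = 0
      · simp [hfy]
      have hxT : x ∈ T := mem_thickening_iff.2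
        ⟨y, subset_tsupport _ hfy, (mem_ball'.1 hy).trans_le (min_le_right _ _)⟩
      have hdist := hfδ ((mem_ball.1 hy).trans_le (min_le_left _ _))
      rw [NNReal.dist_eq] at hdist
      simp only [g, indicator_of_mem hxT, ← ENNReal.coe_add, ENNReal.coe_le_coe]
      rw [← NNReal.coe_le_coe, NNReal.coe_add]
      linarith [(abs_lt.1 hdist).2]
    refine (ENNReal.mul_le_mul_iff_right (hm r hr) hmr).1 ?_
    calc m r * ∫⁻ x, f x ∂μ = ∫⁻ y, f y * ρ (ball y r) ∂μ := by
          simp_rw [hρ]; rw [lintegral_mul_const _ hf, mul_comm]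
      _ = ∫⁻ x, ∫⁻ y in ball x r, f y ∂μ ∂ρ := (lintegral_setLIntegral_ball_comm μ ρ hf r).symm
      _ ≤ ∫⁻ x, ∫⁻ _ in ball x r, g x ∂μ ∂ρ :=
          lintegral_mono fun x => setLIntegral_mono' measurableSet_ball (hfg x)
      _ = m r * (∫⁻ x, f x ∂ρ + ε * ρ T) := by
          simp_rw [setLIntegral_const, hμ]
          rw [lintegral_mul_const' _ _ hmr, mul_comm, lintegral_add_left hf,
            lintegral_indicator_const isOpen_thickening.measurableSet]
  have hlim : Tendsto (fun ε : ℝ≥0 => ∫⁻ x, f x ∂ρ + ε * ρ T) (𝓝[>] 0)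
      (𝓝 (∫⁻ x, f x ∂ρ)) := by
    have hε : Tendsto (fun ε : ℝ≥0 => (ε : ℝ≥0∞)) (𝓝[>] 0) (𝓝 0) :=
      ENNReal.tendsto_coe.2 (tendsto_nhdsWithin_of_tendsto_nhds tendsto_id)
    have hεT : Tendsto (fun ε : ℝ≥0 => (ε : ℝ≥0∞) * ρ T) (𝓝[>] 0) (𝓝 0) := by
      simpa using ENNReal.Tendsto.mul_const hε (Or.inr hT)
    simpa using tendsto_const_nhds.add hεT
  exact ge_of_tendsto hlim (eventually_nhdsWithin_of_forall key)

theorem MeasureTheory.Measure.eq_of_measure_ball_eq (hμ : ∀ x r, μ (ball x r) = m r)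
    (hρ : ∀ x r, ρ (ball x r) = m r) : μ = ρ := by
  by_cases h0 : ∃ r, 0 < r ∧ m r = 0
  · obtain ⟨r, hr, hmr⟩ := h0
    rw [eq_zero_of_measure_ball_eq_zero hr fun x => (hμ x r).trans hmr,
      eq_zero_of_measure_ball_eq_zero hr fun x => (hρ x r).trans hmr]
  push Not at h0
  refine ext_of_integral_eq_on_compactlySupported_nnreal fun f => ?_
  have hint : ∀ ν : Measure M, [IsLocallyFiniteMeasure ν] → Integrable (fun x => (f x : ℝ)) ν :=
    fun ν _ => (NNReal.continuous_coe.comp f.continuous).integrable_of_hasCompactSupport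
      (f.hasCompactSupport.comp_left NNReal.coe_zero)
  have h := le_antisymm (lintegral_le_of_measure_ball_eq hμ hρ h0 f)
    (lintegral_le_of_measure_ball_eq hρ hμ h0 f)
  rw [lintegral_coe_eq_integral _ (hint μ), lintegral_coe_eq_integral _ (hint ρ)] at h
  exact (ENNReal.ofReal_eq_ofReal_iff (integral_nonneg fun _ => NNReal.coe_nonneg _)
    (integral_nonneg fun _ => NNReal.coe_nonneg _)).1 h

end Uniqueness

section Isometry

variable {M : Type*} [MetricSpace M] [MeasurableSpace M] [BorelSpace M]

theorem measure_ball_eq_of_isometry_invariant {μ : Measure M}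
    (htrans : ∀ x y : M, ∃ g : M ≃ᵢ M, g x = y)
    (hμ : ∀ (g : M ≃ᵢ M) (E : Set M), MeasurableSet E → μ (g '' E) = μ E) (x y : M) (r : ℝ) :
    μ (ball x r) = μ (ball y r) := by
  obtain ⟨g, rfl⟩ := htrans x y
  rw [← g.image_ball, hμ g _ measurableSet_ball]

theorem isLocallyFiniteMeasure_of_isometry_invariant {μ : Measure M}
    (htrans : ∀ x y : M, ∃ g : M ≃ᵢ M, g x = y)
    (hμ : ∀ (g : M ≃ᵢ M) (E : Set M), MeasurableSet E → μ (g '' E) = μ E) {A : Set M}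
    (hA : IsOpen A) (hAne : A.Nonempty) (hAfin : μ A ≠ ∞) : IsLocallyFiniteMeasure μ := by
  obtain ⟨a, ha⟩ := hAne
  refine ⟨fun x => ?_⟩
  obtain ⟨g, hg⟩ := htrans a x
  have hgA : IsOpen (g '' A) := g.toHomeomorph.isOpenMap A hA
  exact ⟨g '' A, hgA.mem_nhds ⟨a, ha, hg⟩, by rw [hμ g A hA.measurableSet]; exact hAfin.lt_top⟩

end Isometry

namespace DiagonallyInvariant

variable {M : Type*} [MetricSpace M] [MeasurableSpace M] [BorelSpace M] {ν : Measure (M × M)}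

theorem fst_image (hν : DiagonallyInvariant ν) (g : M ≃ᵢ M) {E : Set M} (hE : MeasurableSet E) :
    ν.fst (g '' E) = ν.fst E := by
  have hgE : MeasurableSet (g '' E) := g.toHomeomorph.toMeasurableEquiv.measurableSet_image.2 hE
  rw [Measure.fst_apply hgE, Measure.fst_apply hE, ← prod_univ,
    ← prod_univ, ← hν g E univ hE MeasurableSet.univ, image_univ_of_surjective g.surjective]

theorem measure_ball_prod_ball_comm (hν : DiagonallyInvariant ν)
    (hsym : ∀ x y : M, ∃ g : M ≃ᵢ M, g x = y ∧ g y = x) (x y : M) (r s : ℝ) :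
    ν (ball x r ×ˢ ball y s) = ν (ball y r ×ˢ ball x s) := by
  obtain ⟨g, hgx, hgy⟩ := hsym x y
  rw [← hν g _ _ measurableSet_ball measurableSet_ball, g.image_ball, g.image_ball, hgx, hgy]

theorem fst_ball_eq (hν : DiagonallyInvariant ν)
    (hsym : ∀ x y : M, ∃ g : M ≃ᵢ M, g x = y ∧ g y = x) (x y : M) (r : ℝ) :
    ν.fst (ball x r) = ν.fst (ball y r) :=
  measure_ball_eq_of_isometry_invariant (fun x y => (hsym x y).imp fun _ h => h.1)
    (fun g _ hE => hν.fst_image g hE) x y r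

theorem isLocallyFiniteMeasure_fst (hν : DiagonallyInvariant ν)
    (hsym : ∀ x y : M, ∃ g : M ≃ᵢ M, g x = y ∧ g y = x) {A : Set M} (hA : IsOpen A)
    (hAne : A.Nonempty) (hAfin : ν (A ×ˢ univ) < ∞) : IsLocallyFiniteMeasure ν.fst :=
  isLocallyFiniteMeasure_of_isometry_invariant (fun x y => (hsym x y).imp fun _ h => h.1)
    (fun g _ hE => hν.fst_image g hE) hA hAne
    (by rw [Measure.fst_apply hA.measurableSet, ← prod_univ]; exact hAfin.ne)

variable [ProperSpace M] [SFinite ν] [IsLocallyFiniteMeasure ν.fst]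

theorem snd_ball_eq_fst_ball (hν : DiagonallyInvariant ν)
    (hsym : ∀ x y : M, ∃ g : M ≃ᵢ M, g x = y ∧ g y = x) (x : M) (s : ℝ) :
    ν.snd (ball x s) = ν.fst (ball x s) := by
  have hball : ∀ y r, ν.fst (ball y r) = ν.fst (ball x r) := fun y => hν.fst_ball_eq hsym y x
  by_cases h0 : ν.fst (ball x 1) = 0
  · have hν0 : ν = 0 := by
      rw [← Measure.measure_univ_eq_zero, ← Measure.fst_univ,
        Measure.eq_zero_of_measure_ball_eq_zero one_pos fun y => (hball y 1).trans h0,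
        Measure.coe_zero, Pi.zero_apply]
    simp [hν0]
  refine (ENNReal.mul_right_inj h0 measure_ball_lt_top.ne).1 ?_
  calc ν.fst (ball x 1) * ν.snd (ball x s)
      = ∫⁻ w, ν (ball w 1 ×ˢ ball x s) ∂ν.fst := by
        rw [lintegral_measure_prod_ball_left ν _ fun y => hball y 1, univ_prod,
          ← Measure.snd_apply measurableSet_ball]
    _ = ∫⁻ w, ν (ball x 1 ×ˢ ball w s) ∂ν.fst :=
        lintegral_congr fun w => hν.measure_ball_prod_ball_comm hsym w x 1 s
    _ = ν.fst (ball x 1) * ν.fst (ball x s) := by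
        rw [lintegral_measure_prod_ball_right ν _ fun y => hball y s, prod_univ,
          ← Measure.fst_apply measurableSet_ball, mul_comm]

theorem snd_eq_fst (hν : DiagonallyInvariant ν)
    (hsym : ∀ x y : M, ∃ g : M ≃ᵢ M, g x = y ∧ g y = x) : ν.snd = ν.fst := by
  obtain _ | ⟨⟨a⟩⟩ := isEmpty_or_nonempty M
  · exact Subsingleton.elim _ _
  have hball : ∀ y r, ν.fst (ball y r) = ν.fst (ball a r) := fun y => hν.fst_ball_eq hsym y a
  have hsnd : ∀ y r, ν.snd (ball y r) = ν.fst (ball a r) :=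
    fun y r => (hν.snd_ball_eq_fst_ball hsym y r).trans (hball y r)
  have : IsLocallyFiniteMeasure ν.snd :=
    ⟨fun x => ⟨ball x 1, ball_mem_nhds x one_pos, hsnd x 1 ▸ measure_ball_lt_top⟩⟩
  exact Measure.eq_of_measure_ball_eq hsnd hball

end DiagonallyInvariant

/-- **Mass Transport Principle.** Let `M` be a proper metric space such that any
two points can be exchanged by an isometry of `M` onto itself, and let `ν` be a positive
diagonally invariant Borel measure on `M × M`. If `ν (A × M) < ∞` for some nonempty open
`A ⊆ M`, then `ν (B × M) = ν (M × B)` for every Borel set `B ⊆ M`. -/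
theorem mass_transport_principle
    {M : Type*} [MetricSpace M] [MeasurableSpace M] [BorelSpace M] [ProperSpace M]
    (hsym : ∀ x y : M, ∃ g : M ≃ᵢ M, g x = y ∧ g y = x)
    (ν : Measure (M × M)) (hν : DiagonallyInvariant ν)
    (hfin : ∃ A : Set M, IsOpen A ∧ A.Nonempty ∧ ν (A ×ˢ (Set.univ : Set M)) < ⊤) :
    ∀ B : Set M, MeasurableSet B →
      ν (B ×ˢ (Set.univ : Set M)) = ν ((Set.univ : Set M) ×ˢ B) := by
  obtain ⟨A, hA, hAne, hAfin⟩ := hfin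
  have := hν.isLocallyFiniteMeasure_fst hsym hA hAne hAfin
  have : SigmaFinite ν := SigmaFinite.of_map ν measurable_fst.aemeasurable
    (inferInstanceAs (SigmaFinite ν.fst))
  intro B hB
  rw [prod_univ, univ_prod, ← Measure.fst_apply hB, ← Measure.snd_apply hB,
    hν.snd_eq_fst hsym]
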